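/- Let ℓ be a fixed positive integer and let σ_0, σ ∈ L_{2ℓ}^2 be perfect matchings of {1,…,2ℓ} with #(σ ∨ σ_0) = 1. There is a constant C, depending only on ℓ, such that for every integer n ≥ 2 and every σ-measurable word j = (j_1,…,j_{2ℓ}) ∈ {1,…,n}^{2ℓ}, the product of two-element cumulants C_{σ_0}(j) = Π_{{a,b}∈σ_0} C(Z_{j_a}, Z_{j_b}) satisfies |C_{σ_0}(j)| ≤ C·n^{−d(j)} whenever d(j) ≥ 2, and |C_{σ_0}(j)| ≤ C whenever d(j) = 1, where d(j) denotes the number of distinct values among j_1,…,j_{2ℓ}. -/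

import Mathlib

open MeasureTheory ProbabilityTheory Finset

noncomputable section

instance permMS (n : ℕ) : MeasurableSpace (Equiv.Perm (Fin n)) := ⊤

/-- The uniform probability measure on the set of all `n!` permutations of `{1,…,n}`. -/
def permMeasure (n : ℕ) : Measure (Equiv.Perm (Fin n)) :=
  (PMF.uniformOfFintype (Equiv.Perm (Fin n))).toMeasure

/-- The rank `Q_i` of the random permutation, as a real number in `{1,…,n}`. -/
def Qr (n : ℕ) (i : Fin n) (σ : Equiv.Perm (Fin n)) : ℝ := (σ i : ℕ) + 1

/-- The centralized and normalized rank `Z_i = sqrt(12/(n²−1))·(Q_i − (n+1)/2)`. -/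
def Zr (n : ℕ) (i : Fin n) (σ : Equiv.Perm (Fin n)) : ℝ :=
  Real.sqrt (12 / ((n : ℝ) ^ 2 - 1)) * (Qr n i σ - ((n : ℝ) + 1) / 2)

attribute [local instance] Classical.propDecidable

/-- `P` is a set partition of the (finite) index type `ι`: its blocks are nonempty and
every index lies in exactly one block. -/
def IsSetPartition {ι : Type*} [Fintype ι] (P : Finset (Finset ι)) : Prop :=
  (∀ A ∈ P, A.Nonempty) ∧ ∀ i : ι, ∃! A : Finset ι, A ∈ P ∧ i ∈ A

/-- A perfect matching: a set partition all of whose blocks have two elements. -/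
def IsPerfectMatching {ι : Type*} [Fintype ι] (P : Finset (Finset ι)) : Prop :=
  IsSetPartition P ∧ ∀ A ∈ P, A.card = 2

/-- The joint cumulant `C(ξ_1,…,ξ_N) = Σ_{π} (−1)^{#π−1}(#π−1)! Π_{A∈π} E[Π_{i∈A} ξ_i]`,
where the sum runs over all set partitions of the index set. -/
def jointCumulant {Ω : Type*} [MeasurableSpace Ω] (μ : Measure Ω)
    {ι : Type*} [Fintype ι] (ξ : ι → Ω → ℝ) : ℝ :=
  ∑ P ∈ Finset.univ.filter (fun P : Finset (Finset ι) => IsSetPartition P),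
    (-1 : ℝ) ^ (P.card - 1) * (Nat.factorial (P.card - 1) : ℝ) *
      ∏ A ∈ P, ∫ ω, (∏ i ∈ A, ξ i ω) ∂μ

/-- `E_σ(ξ) = Π_{A∈σ} E[Π_{i∈A} ξ_i]`. -/
def momProd {Ω : Type*} [MeasurableSpace Ω] (μ : Measure Ω)
    {ι : Type*} (P : Finset (Finset ι)) (ξ : ι → Ω → ℝ) : ℝ :=
  ∏ A ∈ P, ∫ ω, (∏ i ∈ A, ξ i ω) ∂μ

/-- `C_π(ξ) = Π_{A∈π} C({ξ_i}_{i∈A})`, the product over the blocks of `π` of the joint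
cumulants of the variables indexed by each block. -/
def cumProd {Ω : Type*} [MeasurableSpace Ω] (μ : Measure Ω)
    {ι : Type*} [Fintype ι] (P : Finset (Finset ι)) (ξ : ι → Ω → ℝ) : ℝ :=
  ∏ A ∈ P, jointCumulant μ (fun a : {x // x ∈ A} => ξ a.1)

/-- The relation generating the join `P ∨ Q` of two set partitions: the equivalence closure
of "lying in a common block of `P` or of `Q`". -/
def joinRel {ι : Type*} (P Q : Finset (Finset ι)) : ι → ι → Prop :=
  Relation.EqvGen fun a b => (∃ A ∈ P, a ∈ A ∧ b ∈ A) ∨ (∃ A ∈ Q, a ∈ A ∧ b ∈ A)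

/-- `B` is a block of the join `P ∨ Q`, i.e. an equivalence class of `joinRel P Q`. -/
def IsJoinBlock {ι : Type*} [Fintype ι] (P Q : Finset (Finset ι)) (B : Finset ι) : Prop :=
  ∃ a : ι, B = Finset.univ.filter (fun b => joinRel P Q a b)

/-- The set of blocks of the join `P ∨ Q`. -/
def joinBlocks {ι : Type*} [Fintype ι] (P Q : Finset (Finset ι)) : Finset (Finset ι) :=
  Finset.univ.filter (fun B : Finset ι => IsJoinBlock P Q B)

/-- `#(P ∨ Q)`, the number of blocks of the join of two set partitions. -/
def joinCard {ι : Type*} [Fintype ι] (P Q : Finset (Finset ι)) : ℕ :=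
  (joinBlocks P Q).card

/-- A word `j` is `π`-measurable if `j_α = j_β` whenever `α, β` lie in the same block. -/
def WordMeasurable {ι κ : Type*} (P : Finset (Finset ι)) (j : ι → κ) : Prop :=
  ∀ A ∈ P, ∀ a ∈ A, ∀ b ∈ A, j a = j b

/-!
Each block `{a, b}` of `σ₀` contributes the covariance of `Z_{j_a}` and `Z_{j_b}`, which by
exchangeability of the ranks and `∑ i, Z_i = 0` is `1` if `j_a = j_b` and `-1/(n-1)` otherwise.
Hence `|C_{σ₀}(j)| ≤ (2/n)^k`, where `k` counts the blocks of `σ₀` on which `j` is not constant,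
and it remains to show `d(j) ≤ k`. Count, for each colour `c`, the non-constant blocks of `σ₀`
meeting the colour class `j⁻¹(c)`. The class is a union of blocks of `σ`, so it has even size,
and the count is even. The count is nonzero, since otherwise the class would be a union of blocks
of both `σ` and `σ₀`, which contradicts `σ ∨ σ₀ = 1̂` when `d(j) ≥ 2`. So each of the `d(j)`
colours is counted at least twice, while each non-constant block meets at most two colours.
-/

section SetPartition

variable {ι κ : Type*}

lemma WordMeasurable.eq_of_joinRel {P Q : Finset (Finset ι)} {f : ι → κ}
    (hP : WordMeasurable P f) (hQ : WordMeasurable Q f) {a b : ι} (h : joinRel P Q a b) :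
    f a = f b := by
  induction h with
  | rel a b hab =>
    rcases hab with ⟨A, hA, ha, hb⟩ | ⟨A, hA, ha, hb⟩
    exacts [hP A hA a ha b hb, hQ A hA a ha b hb]
  | refl => rfl
  | symm _ _ _ ih => exact ih.symm
  | trans _ _ _ _ _ ih₁ ih₂ => exact ih₁.trans ih₂

lemma joinRel_of_joinCard_eq_one [Fintype ι] {P Q : Finset (Finset ι)} (h : joinCard P Q = 1)
    (a b : ι) : joinRel P Q a b := by
  have hmem : ∀ x, univ.filter (joinRel P Q x) ∈ joinBlocks P Q :=
    fun x => mem_filter.mpr ⟨mem_univ _, x, rfl⟩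
  have hb : b ∈ univ.filter (joinRel P Q b) :=
    mem_filter.mpr ⟨mem_univ _, Relation.EqvGen.refl b⟩
  rw [← card_le_one.mp h.le _ (hmem a) _ (hmem b)] at hb
  exact (mem_filter.mp hb).2

lemma IsSetPartition.eq_of_mem [Fintype ι] {P : Finset (Finset ι)} (hP : IsSetPartition P)
    {A B : Finset ι} {i : ι} (hA : A ∈ P) (hB : B ∈ P) (hiA : i ∈ A) (hiB : i ∈ B) : A = B :=
  (hP.2 i).unique ⟨hA, hiA⟩ ⟨hB, hiB⟩

lemma IsSetPartition.sum_card_filter [Fintype ι] [DecidableEq ι] {P : Finset (Finset ι)}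
    (hP : IsSetPartition P) (p : ι → Prop) [DecidablePred p] :
    ∑ A ∈ P, #(A.filter p) = #(univ.filter p) := by
  rw [← card_biUnion]
  · congr 1 with i
    obtain ⟨A, ⟨hA, hiA⟩, -⟩ := hP.2 i
    simp only [mem_biUnion, mem_filter, mem_univ, true_and]
    exact ⟨fun ⟨_, _, _, hi⟩ => hi, fun hi => ⟨A, hA, hiA, hi⟩⟩
  · intro A hA B hB hAB
    simp only [Function.onFun, disjoint_left, mem_filter]
    exact fun i hiA hiB => hAB (hP.eq_of_mem hA hB hiA.1 hiB.1)

lemma IsSetPartition.exists_singleton_mem_of_card_eq_two [Fintype ι] {P : Finset (Finset ι)}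
    (hP : IsSetPartition P) (hι : Fintype.card ι = 2) (hne : P ≠ {univ}) : ∃ i, {i} ∈ P := by
  by_contra! h
  have hsub : P ⊆ {univ} := by
    intro A hA
    rw [mem_singleton]
    refine eq_univ_of_card A ?_
    have h1 : 1 ≤ #A := (hP.1 A hA).card_pos
    have h2 : #A ≤ 2 := hι ▸ card_le_univ A
    have h3 : #A ≠ 1 := fun h1 => by
      obtain ⟨i, rfl⟩ := card_eq_one.mp h1
      exact h i hA
    omega
  have : Nonempty ι := Fintype.card_pos_iff.mp (by omega)
  obtain ⟨A, ⟨hA, -⟩, -⟩ := hP.2 (Classical.arbitrary ι)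
  exact hne ((Finset.Nonempty.subset_singleton_iff ⟨A, hA⟩).mp hsub)

lemma jointCumulant_eq_integral_prod_of_card_eq_two [Fintype ι] {Ω : Type*} [MeasurableSpace Ω]
    (μ : Measure Ω) (ξ : ι → Ω → ℝ) (hι : Fintype.card ι = 2)
    (hξ : ∀ i, ∫ ω, ξ i ω ∂μ = 0) :
    jointCumulant μ ξ = ∫ ω, ∏ i, ξ i ω ∂μ := by
  have : Nonempty ι := Fintype.card_pos_iff.mp (by omega)
  have huniv : IsSetPartition ({univ} : Finset (Finset ι)) :=
    ⟨by simp, fun i => ⟨univ, by simp, by simp⟩⟩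
  rw [jointCumulant, sum_eq_single_of_mem {univ} (by simpa using huniv)]
  · simp
  · intro P hP hne
    obtain ⟨i, hi⟩ := (mem_filter.mp hP).2.exists_singleton_mem_of_card_eq_two hι hne
    rw [prod_eq_zero hi (by simp [hξ]), mul_zero]

end SetPartition

section NonconstBlocks

variable {ι κ : Type*} [DecidableEq κ]

def nonconstBlocks (P : Finset (Finset ι)) (j : ι → κ) : Finset (Finset ι) :=
  P.filter fun A => 1 < #(A.image j)

lemma WordMeasurable.even_card_fiber [Fintype ι] [DecidableEq ι] {σ : Finset (Finset ι)}
    {j : ι → κ} (hj : WordMeasurable σ j) (hσ : IsSetPartition σ) (heven : ∀ B ∈ σ, Even #B)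
    (c : κ) : Even #(univ.filter (j · = c)) := by
  rw [← hσ.sum_card_filter]
  refine even_sum _ fun B hB => ?_
  by_cases h : ∃ b ∈ B, j b = c
  · obtain ⟨b, hb, rfl⟩ := h
    rw [filter_true_of_mem fun x hx => hj B hB x hx b hb]
    exact heven B hB
  · rw [filter_false_of_mem fun b hb hbc => h ⟨b, hb, hbc⟩, card_empty]
    exact Even.zero

lemma odd_card_filter_iff_of_card_eq_two [DecidableEq ι] {A : Finset ι} (hA : #A = 2)
    (j : ι → κ) (c : κ) :
    Odd #(A.filter (j · = c)) ↔ 1 < #(A.image j) ∧ c ∈ A.image j := by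
  obtain ⟨x, y, hxy, rfl⟩ := card_eq_two.mp hA
  by_cases hx : j x = c <;> by_cases hy : j y = c <;>
    simp only [filter_insert, filter_singleton, hx, hy, if_true, if_false, image_insert,
      image_singleton]
  · simp [card_pair hxy]
  · simp [card_pair (Ne.symm hy)]
  · simp [card_pair hx]
  · simp [Ne.symm hx, Ne.symm hy]

lemma even_card_filter_mem_image_nonconstBlocks [Fintype ι] [DecidableEq ι]
    {σ₀ σ : Finset (Finset ι)} (hσ₀ : IsPerfectMatching σ₀) (hσ : IsSetPartition σ)
    (heven : ∀ B ∈ σ, Even #B) {j : ι → κ} (hj : WordMeasurable σ j) (c : κ) :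
    Even #((nonconstBlocks σ₀ j).filter (c ∈ ·.image j)) := by
  have h := hj.even_card_fiber hσ heven c
  rw [← hσ₀.1.sum_card_filter, even_sum_iff_even_card_odd] at h
  convert h using 2
  rw [nonconstBlocks, filter_filter]
  exact filter_congr fun A hA => (odd_card_filter_iff_of_card_eq_two (hσ₀.2 A hA) j c).symm

lemma exists_mem_nonconstBlocks_of_joinRel {σ₀ σ : Finset (Finset ι)}
    (hconn : ∀ a b, joinRel σ σ₀ a b) {j : ι → κ} (hj : WordMeasurable σ j) {u v : ι}
    (huv : j u ≠ j v) : ∃ A ∈ nonconstBlocks σ₀ j, j u ∈ A.image j := by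
  by_contra! h
  have hclosed : ∀ A ∈ σ₀, ∀ a ∈ A, ∀ b ∈ A, j a = j u → j b = j u := by
    intro A hA a ha b hb hau
    by_contra hbu
    refine h A (mem_filter.mpr ⟨hA, one_lt_card.mpr ⟨j a, mem_image_of_mem j ha, j b,
      mem_image_of_mem j hb, hau ▸ Ne.symm hbu⟩⟩) (hau ▸ mem_image_of_mem j ha)
  have hσ' : WordMeasurable σ (j · = j u) := fun A hA a ha b hb =>
    congrArg (· = j u) (hj A hA a ha b hb)
  have hσ₀' : WordMeasurable σ₀ (j · = j u) := fun A hA a ha b hb =>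
    propext ⟨hclosed A hA a ha b hb, hclosed A hA b hb a ha⟩
  exact huv (Eq.mp (hσ'.eq_of_joinRel hσ₀' (hconn u v)) rfl).symm

lemma sum_card_filter_mem_image_nonconstBlocks_le {σ₀ : Finset (Finset ι)}
    (hσ₀ : ∀ A ∈ σ₀, #A = 2) (j : ι → κ) (s : Finset κ) :
    ∑ c ∈ s, #((nonconstBlocks σ₀ j).filter (c ∈ ·.image j)) ≤ 2 * #(nonconstBlocks σ₀ j) := by
  calc ∑ c ∈ s, #((nonconstBlocks σ₀ j).filter (c ∈ ·.image j))
      = ∑ A ∈ nonconstBlocks σ₀ j, #(s.filter (· ∈ A.image j)) := by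
        simp only [card_filter]
        exact sum_comm
    _ ≤ ∑ _A ∈ nonconstBlocks σ₀ j, 2 := sum_le_sum fun A hA =>
        calc #(s.filter (· ∈ A.image j)) ≤ #(A.image j) :=
              card_le_card fun c hc => (mem_filter.mp hc).2
          _ ≤ #A := card_image_le
          _ = 2 := hσ₀ A (mem_of_mem_filter A hA)
    _ = 2 * #(nonconstBlocks σ₀ j) := by rw [sum_const, smul_eq_mul, mul_comm]

theorem card_image_le_card_nonconstBlocks [Fintype ι] [DecidableEq ι]
    {σ₀ σ : Finset (Finset ι)} (hσ₀ : IsPerfectMatching σ₀) (hσ : IsSetPartition σ)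
    (heven : ∀ B ∈ σ, Even #B) (hconn : ∀ a b, joinRel σ σ₀ a b) {j : ι → κ}
    (hj : WordMeasurable σ j) (hd : 2 ≤ #(univ.image j)) :
    #(univ.image j) ≤ #(nonconstBlocks σ₀ j) := by
  have hdeg : ∀ c ∈ univ.image j, 2 ≤ #((nonconstBlocks σ₀ j).filter (c ∈ ·.image j)) := by
    intro c hc
    obtain ⟨u, -, rfl⟩ := mem_image.mp hc
    obtain ⟨c', hc', hne⟩ := exists_mem_ne hd (j u)
    obtain ⟨v, -, rfl⟩ := mem_image.mp hc'
    obtain ⟨A, hA, hu⟩ := exists_mem_nonconstBlocks_of_joinRel hconn hj (Ne.symm hne)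
    have hpos : 0 < #((nonconstBlocks σ₀ j).filter (j u ∈ ·.image j)) :=
      card_pos.mpr ⟨A, mem_filter.mpr ⟨hA, hu⟩⟩
    obtain ⟨k, hk⟩ := even_card_filter_mem_image_nonconstBlocks hσ₀ hσ heven hj (j u)
    omega
  have := (card_nsmul_le_sum _ _ 2 hdeg).trans
    (sum_card_filter_mem_image_nonconstBlocks_le hσ₀.2 j (univ.image j))
  rw [smul_eq_mul] at this
  omega

end NonconstBlocks

lemma sum_range_natCast (m : ℕ) : ∑ i ∈ range m, (i : ℝ) = m * (m - 1) / 2 := by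
  induction m with
  | zero => simp
  | succ m ih => rw [sum_range_succ, ih]; push_cast; ring

lemma sum_range_natCast_sq (m : ℕ) :
    ∑ i ∈ range m, (i : ℝ) ^ 2 = m * (m - 1) * (2 * m - 1) / 6 := by
  induction m with
  | zero => simp
  | succ m ih => rw [sum_range_succ, ih]; push_cast; ring

section Ranks

variable {n : ℕ}

instance : MeasurableSingletonClass (Equiv.Perm (Fin n)) :=
  ⟨fun _ => MeasurableSpace.measurableSet_top⟩

instance : IsProbabilityMeasure (permMeasure n) := by
  unfold permMeasure; infer_instance

lemma integral_permMeasure (f : Equiv.Perm (Fin n) → ℝ) :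
    ∫ σ, f σ ∂permMeasure n = (∑ σ, f σ) / n.factorial := by
  simp [permMeasure, PMF.integral_eq_sum, Fintype.card_perm, ← mul_sum, div_eq_inv_mul]

lemma integral_permMeasure_comp_mul_right (F : Equiv.Perm (Fin n) → ℝ)
    (π : Equiv.Perm (Fin n)) :
    ∫ σ, F (σ * π) ∂permMeasure n = ∫ σ, F σ ∂permMeasure n := by
  rw [integral_permMeasure, integral_permMeasure, ← Equiv.sum_comp (Equiv.mulRight π) F]
  rfl

lemma integral_permMeasure_sum (F : Fin n → Equiv.Perm (Fin n) → ℝ) :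
    ∫ σ, ∑ i, F i σ ∂permMeasure n = ∑ i, ∫ σ, F i σ ∂permMeasure n :=
  integral_finsetSum _ fun _ _ => Integrable.of_finite

lemma Zr_mul (i : Fin n) (σ π : Equiv.Perm (Fin n)) : Zr n i (σ * π) = Zr n (π i) σ := rfl

lemma sum_comp_Zr (f : ℝ → ℝ) (σ : Equiv.Perm (Fin n)) :
    ∑ i, f (Zr n i σ) = ∑ i, f (Zr n i 1) :=
  Equiv.sum_comp σ fun k => f (Zr n k 1)

lemma Zr_one (i : Fin n) :
    Zr n i 1 = √(12 / ((n : ℝ) ^ 2 - 1)) * ((i : ℝ) - ((n : ℝ) - 1) / 2) := by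
  rw [Zr, Qr, Equiv.Perm.one_apply]; ring

lemma sum_Zr_one : ∑ i, Zr n i 1 = 0 := by
  simp only [Zr_one, ← mul_sum,
    Fin.sum_univ_eq_sum_range (fun i => (i : ℝ) - ((n : ℝ) - 1) / 2),
    sum_sub_distrib, sum_range_natCast, sum_const, card_range, nsmul_eq_mul]
  ring

lemma sum_Zr_one_sq (hn : 2 ≤ n) : ∑ i, Zr n i 1 ^ 2 = n := by
  have hn' : 0 < (n : ℝ) ^ 2 - 1 := by
    have : (2 : ℝ) ≤ n := by exact_mod_cast hn
    nlinarith
  have hsq : ∑ i ∈ range n, ((i : ℝ) - ((n : ℝ) - 1) / 2) ^ 2 = n * ((n : ℝ) ^ 2 - 1) / 12 := by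
    simp only [sub_sq, sum_add_distrib, sum_sub_distrib, ← sum_mul, ← mul_sum, sum_range_natCast,
      sum_range_natCast_sq, sum_const, card_range, nsmul_eq_mul]
    ring
  simp only [Zr_one, mul_pow, ← mul_sum]
  rw [Fin.sum_univ_eq_sum_range (fun i => ((i : ℝ) - ((n : ℝ) - 1) / 2) ^ 2), hsq,
    Real.sq_sqrt (div_nonneg (by norm_num) hn'.le)]
  field_simp

lemma sum_Zr (σ : Equiv.Perm (Fin n)) : ∑ i, Zr n i σ = 0 :=
  (sum_comp_Zr id σ).trans sum_Zr_one

lemma integral_comp_Zr_eq (f : ℝ → ℝ) (i k : Fin n) :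
    ∫ σ, f (Zr n i σ) ∂permMeasure n = ∫ σ, f (Zr n k σ) ∂permMeasure n := by
  rw [← integral_permMeasure_comp_mul_right _ (Equiv.swap i k)]
  simp only [Zr_mul, Equiv.swap_apply_left]

lemma integral_comp_Zr (f : ℝ → ℝ) (i : Fin n) :
    ∫ σ, f (Zr n i σ) ∂permMeasure n = (∑ k, f (Zr n k 1)) / n := by
  have hn : (n : ℝ) ≠ 0 := by exact_mod_cast (Fin.pos i).ne'
  have hsum : ∑ k, ∫ σ, f (Zr n k σ) ∂permMeasure n = ∑ k, f (Zr n k 1) := by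
    simp [← integral_permMeasure_sum, sum_comp_Zr f]
  rw [eq_div_iff hn, ← hsum, sum_congr rfl fun k _ => integral_comp_Zr_eq f k i, sum_const,
    card_univ, Fintype.card_fin, nsmul_eq_mul, mul_comm]

lemma integral_Zr (i : Fin n) : ∫ σ, Zr n i σ ∂permMeasure n = 0 := by
  simpa [sum_Zr_one] using integral_comp_Zr id i

lemma integral_Zr_mul_self (hn : 2 ≤ n) (i : Fin n) :
    ∫ σ, Zr n i σ * Zr n i σ ∂permMeasure n = 1 := by
  have hn' : (n : ℝ) ≠ 0 := by positivity
  simp_rw [← sq, integral_comp_Zr (· ^ 2) i, sum_Zr_one_sq hn, div_self hn']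

lemma integral_Zr_mul_Zr_of_ne {i j : Fin n} (hij : i ≠ j) :
    ∫ σ, Zr n i σ * Zr n j σ ∂permMeasure n = -((n : ℝ) - 1)⁻¹ := by
  have hn : 2 ≤ n := by
    have := Fin.val_ne_of_ne hij
    omega
  have hswap : ∀ k ≠ i, ∫ σ, Zr n i σ * Zr n k σ ∂permMeasure n =
      ∫ σ, Zr n i σ * Zr n j σ ∂permMeasure n := by
    intro k hk
    rw [← integral_permMeasure_comp_mul_right _ (Equiv.swap j k)]
    simp only [Zr_mul, Equiv.swap_apply_right, Equiv.swap_apply_of_ne_of_ne hij hk.symm]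
  have hsum : ∑ k, ∫ σ, Zr n i σ * Zr n k σ ∂permMeasure n = 0 := by
    simp [← integral_permMeasure_sum, ← mul_sum, sum_Zr]
  rw [← add_sum_erase _ _ (mem_univ i), sum_congr rfl fun k hk => hswap k (ne_of_mem_erase hk),
    sum_const, card_erase_of_mem (mem_univ i), card_univ, Fintype.card_fin,
    integral_Zr_mul_self hn, nsmul_eq_mul, Nat.cast_sub (by omega)] at hsum
  have hn' : (n : ℝ) - 1 ≠ 0 := by
    have : (2 : ℝ) ≤ n := by exact_mod_cast hn
    linarith
  field_simp
  push_cast at hsum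
  linarith

variable {ι : Type*}

lemma jointCumulant_Zr_pair [DecidableEq ι] {x y : ι} (hxy : x ≠ y) (j : ι → Fin n) :
    jointCumulant (permMeasure n) (fun a : {z // z ∈ ({x, y} : Finset ι)} => Zr n (j a)) =
      ∫ σ, Zr n (j x) σ * Zr n (j y) σ ∂permMeasure n := by
  rw [jointCumulant_eq_integral_prod_of_card_eq_two _ _ (by simp [card_pair hxy])
    fun _ => integral_Zr _]
  congr 1 with σ
  rw [prod_coe_sort {x, y} fun a => Zr n (j a) σ, prod_pair hxy]

lemma abs_jointCumulant_Zr_le [DecidableEq ι] (hn : 2 ≤ n) {A : Finset ι} (hA : #A = 2)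
    (j : ι → Fin n) :
    |jointCumulant (permMeasure n) (fun a : {z // z ∈ A} => Zr n (j a))| ≤
      if 1 < #(A.image j) then (2 : ℝ) / n else 1 := by
  obtain ⟨x, y, hxy, rfl⟩ := card_eq_two.mp hA
  rw [jointCumulant_Zr_pair hxy, image_insert, image_singleton]
  by_cases hj : j x = j y
  · simp [hj, integral_Zr_mul_self hn]
  · have hn' : (2 : ℝ) ≤ n := by exact_mod_cast hn
    rw [if_pos (by simp [card_pair hj]), integral_Zr_mul_Zr_of_ne hj, abs_neg,
      abs_inv, abs_of_pos (by linarith), inv_le_iff_one_le_mul₀ (by linarith)]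
    field_simp
    linarith

lemma abs_cumProd_Zr_le [Fintype ι] [DecidableEq ι] (hn : 2 ≤ n) {σ₀ : Finset (Finset ι)}
    (hσ₀ : ∀ A ∈ σ₀, #A = 2) (j : ι → Fin n) :
    |cumProd (permMeasure n) σ₀ (fun a => Zr n (j a))| ≤
      ((2 : ℝ) / n) ^ #(nonconstBlocks σ₀ j) := by
  rw [cumProd, abs_prod]
  calc _ ≤ ∏ A ∈ σ₀, if 1 < #(A.image j) then (2 : ℝ) / n else 1 :=
        prod_le_prod (fun _ _ => abs_nonneg _) fun A hA =>
          abs_jointCumulant_Zr_le hn (hσ₀ A hA) j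
    _ = _ := by rw [prod_ite, prod_const, prod_const, one_pow, mul_one, nonconstBlocks]

end Ranks

theorem spearman_cycle_bound_general (ℓ : ℕ)
    (σ₀ σ : Finset (Finset (Fin (2 * ℓ))))
    (hσ₀ : IsPerfectMatching σ₀) (hσ : IsPerfectMatching σ)
    (hjoin : joinCard σ σ₀ = 1) :
    ∃ C : ℝ, ∀ n : ℕ, 2 ≤ n → ∀ j : Fin (2 * ℓ) → Fin n, WordMeasurable σ j →
      (2 ≤ (Finset.univ.image j).card →
        |cumProd (permMeasure n) σ₀ (fun a => Zr n (j a))| ≤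
          C * (n : ℝ) ^ (-((Finset.univ.image j).card : ℤ))) ∧
      ((Finset.univ.image j).card = 1 →
        |cumProd (permMeasure n) σ₀ (fun a => Zr n (j a))| ≤ C) := by
  refine ⟨2 ^ (2 * ℓ), fun n hn j hj => ?_⟩
  have hbound := abs_cumProd_Zr_le hn hσ₀.2 j
  have hn' : (2 : ℝ) ≤ n := by exact_mod_cast hn
  have hq₀ : (0 : ℝ) ≤ 2 / n := by positivity
  have hq₁ : (2 : ℝ) / n ≤ 1 := (div_le_one (by linarith)).mpr hn'
  refine ⟨fun hd => ?_, fun _ => ?_⟩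
  · have hcount := card_image_le_card_nonconstBlocks hσ₀ hσ.1
      (fun B hB => by rw [hσ.2 B hB]; exact even_two) (joinRel_of_joinCard_eq_one hjoin) hj hd
    have hd' : #(univ.image j) ≤ 2 * ℓ := card_image_le.trans_eq (card_fin _)
    calc _ ≤ ((2 : ℝ) / n) ^ #(nonconstBlocks σ₀ j) := hbound
      _ ≤ ((2 : ℝ) / n) ^ #(univ.image j) := pow_le_pow_of_le_one hq₀ hq₁ hcount
      _ = 2 ^ #(univ.image j) * (n : ℝ) ^ (-(#(univ.image j) : ℤ)) := by
        rw [div_pow, zpow_neg, zpow_natCast, div_eq_mul_inv]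
      _ ≤ 2 ^ (2 * ℓ) * (n : ℝ) ^ (-(#(univ.image j) : ℤ)) := by gcongr; norm_num
  · exact hbound.trans ((pow_le_one₀ hq₀ hq₁).trans (one_le_pow₀ (by norm_num)))

/-- Bound on a single cycle: if `σ_0, σ` are perfect matchings of `{1,…,2ℓ}` with
`#(σ ∨ σ_0) = 1`, then there is a constant `C` such that for all `n ≥ 2` and every
`σ`-measurable word `j`, the product `C_{σ_0}(j) = Π_{{a,b}∈σ_0} C(Z_{j_a},Z_{j_b})`
satisfies `|C_{σ_0}(j)| ≤ C·n^{−d(j)}` when `d(j) ≥ 2` and `|C_{σ_0}(j)| ≤ C` when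
`d(j) = 1`, where `d(j)` is the number of distinct values among the `j_α`. -/
theorem spearman_cycle_bound (ℓ : ℕ) (hℓ : 0 < ℓ)
    (σ₀ σ : Finset (Finset (Fin (2 * ℓ))))
    (hσ₀ : IsPerfectMatching σ₀) (hσ : IsPerfectMatching σ)
    (hjoin : joinCard σ σ₀ = 1) :
    ∃ C : ℝ, ∀ n : ℕ, 2 ≤ n → ∀ j : Fin (2 * ℓ) → Fin n, WordMeasurable σ j →
      (2 ≤ (Finset.univ.image j).card →
        |cumProd (permMeasure n) σ₀ (fun a => Zr n (j a))| ≤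
          C * (n : ℝ) ^ (-((Finset.univ.image j).card : ℤ))) ∧
      ((Finset.univ.image j).card = 1 →
        |cumProd (permMeasure n) σ₀ (fun a => Zr n (j a))| ≤ C) :=
  spearman_cycle_bound_general ℓ σ₀ σ hσ₀ hσ hjoin
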